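/- In the graph G₂ above (OV-graph plus x, y, edge xy, edges a–x for a ∈ A and b–y for b ∈ B), for every a ∈ A and b ∈ B: if a and b are orthogonal then d(a,b) = 3 and every shortest a–b path passes through x and y; if a and b are not orthogonal then d(a,b) = 2 and no shortest a–b path passes through x. -/
import Mathlib


/-- The OV-graph augmented for betweenness centrality: extra vertices `x = Sum.inr false`
and `y = Sum.inr true`, the edge `xy`, edges `a–x` for all `a ∈ A` and `b–y` for
all `b ∈ B`. -/
def BCGraph {n m d : ℕ} (a : Fin n → Fin d → Bool) (b : Fin m → Fin d → Bool) :
    SimpleGraph (((Fin n ⊕ Fin m) ⊕ Fin d) ⊕ Bool) :=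
  SimpleGraph.fromRel fun u v =>
    match u, v with
    | Sum.inl (Sum.inl (Sum.inl i)), Sum.inl (Sum.inr k) => a i k
    | Sum.inl (Sum.inl (Sum.inr j)), Sum.inl (Sum.inr k) => b j k
    | Sum.inr false, Sum.inr true => True
    | Sum.inl (Sum.inl (Sum.inl _)), Sum.inr false => True
    | Sum.inl (Sum.inl (Sum.inr _)), Sum.inr true => True
    | _, _ => False

section
variable {n m d : ℕ} {a : Fin n → Fin d → Bool} {b : Fin m → Fin d → Bool}

lemma adjAX (i : Fin n) : (BCGraph a b).Adj (Sum.inl (Sum.inl (Sum.inl i))) (Sum.inr false) := by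
  simp [BCGraph, SimpleGraph.fromRel_adj]

lemma adjXY : (BCGraph a b).Adj (Sum.inr false) (Sum.inr true) := by
  simp [BCGraph, SimpleGraph.fromRel_adj]

lemma adjYB (j : Fin m) : (BCGraph a b).Adj (Sum.inr true) (Sum.inl (Sum.inl (Sum.inr j))) := by
  simp [BCGraph, SimpleGraph.fromRel_adj]

lemma adjAC {i : Fin n} {k : Fin d} (h : a i k = true) :
    (BCGraph a b).Adj (Sum.inl (Sum.inl (Sum.inl i))) (Sum.inl (Sum.inr k)) := by
  simp [BCGraph, SimpleGraph.fromRel_adj, h]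

lemma adjCB {j : Fin m} {k : Fin d} (h : b j k = true) :
    (BCGraph a b).Adj (Sum.inl (Sum.inr k)) (Sum.inl (Sum.inl (Sum.inr j))) := by
  simp [BCGraph, SimpleGraph.fromRel_adj, h]

lemma nbrA {i : Fin n} {v} (h : (BCGraph a b).Adj (Sum.inl (Sum.inl (Sum.inl i))) v) :
    (∃ k, v = Sum.inl (Sum.inr k) ∧ a i k = true) ∨ v = Sum.inr false := by
  rcases v with ((i'|j')|k)|(_|_) <;> simp_all [BCGraph, SimpleGraph.fromRel_adj]

lemma nbrB {j : Fin m} {v} (h : (BCGraph a b).Adj v (Sum.inl (Sum.inl (Sum.inr j)))) :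
    (∃ k, v = Sum.inl (Sum.inr k) ∧ b j k = true) ∨ v = Sum.inr true := by
  rcases v with ((i'|j')|k)|(_|_) <;> simp_all [BCGraph, SimpleGraph.fromRel_adj]


lemma nbrX {v} (h : (BCGraph a b).Adj (Sum.inr false) v) :
    (∃ i', v = Sum.inl (Sum.inl (Sum.inl i'))) ∨ v = Sum.inr true := by
  rcases v with ((i'|j')|k)|(_|_) <;> simp_all [BCGraph, SimpleGraph.fromRel_adj]

lemma not_adjCC {k k' : Fin d} : ¬ (BCGraph a b).Adj (Sum.inl (Sum.inr k)) (Sum.inl (Sum.inr k')) := by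
  simp [BCGraph, SimpleGraph.fromRel_adj]

lemma not_adjCY {k : Fin d} : ¬ (BCGraph a b).Adj (Sum.inl (Sum.inr k)) (Sum.inr true) := by
  simp [BCGraph, SimpleGraph.fromRel_adj]

lemma not_adjAB {i : Fin n} {j : Fin m} :
    ¬ (BCGraph a b).Adj (Sum.inl (Sum.inl (Sum.inl i))) (Sum.inl (Sum.inl (Sum.inr j))) := by
  intro h
  rcases nbrA h with ⟨k, hk, _⟩ | hk <;> simp at hk

lemma len_ge_two {i : Fin n} {j : Fin m}
    (p : (BCGraph a b).Walk (Sum.inl (Sum.inl (Sum.inl i))) (Sum.inl (Sum.inl (Sum.inr j)))) :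
    2 ≤ p.length := by
  cases p with
  | cons h q =>
    cases q with
    | nil => exact absurd h not_adjAB
    | cons h2 r => simp only [SimpleGraph.Walk.length_cons]; omega

lemma len_ge_three {i : Fin n} {j : Fin m} (horth : ∀ k, ¬(a i k = true ∧ b j k = true))
    (p : (BCGraph a b).Walk (Sum.inl (Sum.inl (Sum.inl i))) (Sum.inl (Sum.inl (Sum.inr j)))) :
    3 ≤ p.length := by
  cases p with
  | cons h q =>
    cases q with
    | nil => exact absurd h not_adjAB
    | cons h2 r =>
      cases r with
      | nil =>
        exfalso
        rcases nbrA h with ⟨k, hk, hak⟩ | hk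
        · subst hk
          rcases nbrB h2 with ⟨k', hk', hbk⟩ | hk'
          · simp only [Sum.inl.injEq, Sum.inr.injEq] at hk'
            subst hk'
            exact horth k ⟨hak, hbk⟩
          · simp at hk'
        · subst hk
          rcases nbrB h2 with ⟨k', hk', hbk⟩ | hk' <;> simp at hk'
      | cons h3 r' => simp only [SimpleGraph.Walk.length_cons]; omega

end

/-- In the augmented OV-graph: if `a` and `b` are orthogonal then `d(a,b) = 3` and every
shortest `a`–`b` path passes through both `x` and `y`; if they are not orthogonal then
`d(a,b) = 2` and no shortest `a`–`b` path passes through `x`. -/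
theorem stmt9 {n m d : ℕ} (a : Fin n → Fin d → Bool) (b : Fin m → Fin d → Bool)
    (ha : ∀ i, ∃ k, a i k) (hb : ∀ j, ∃ k, b j k) (i : Fin n) (j : Fin m) :
    ((∀ k, ¬(a i k ∧ b j k)) →
      (BCGraph a b).dist (Sum.inl (Sum.inl (Sum.inl i))) (Sum.inl (Sum.inl (Sum.inr j))) = 3 ∧
      ∀ p : (BCGraph a b).Walk (Sum.inl (Sum.inl (Sum.inl i))) (Sum.inl (Sum.inl (Sum.inr j))),
        p.IsPath →
        p.length = (BCGraph a b).dist (Sum.inl (Sum.inl (Sum.inl i)))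
          (Sum.inl (Sum.inl (Sum.inr j))) →
        Sum.inr false ∈ p.support ∧ Sum.inr true ∈ p.support) ∧
    ((∃ k, a i k ∧ b j k) →
      (BCGraph a b).dist (Sum.inl (Sum.inl (Sum.inl i))) (Sum.inl (Sum.inl (Sum.inr j))) = 2 ∧
      ∀ p : (BCGraph a b).Walk (Sum.inl (Sum.inl (Sum.inl i))) (Sum.inl (Sum.inl (Sum.inr j))),
        p.IsPath →
        p.length = (BCGraph a b).dist (Sum.inl (Sum.inl (Sum.inl i)))
          (Sum.inl (Sum.inl (Sum.inr j))) →
        Sum.inr false ∉ p.support) := by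
  constructor
  · intro horth
    set w3 : (BCGraph a b).Walk (Sum.inl (Sum.inl (Sum.inl i))) (Sum.inl (Sum.inl (Sum.inr j))) :=
      .cons (adjAX i) (.cons adjXY (.cons (adjYB j) .nil)) with hw3
    have hle : (BCGraph a b).dist (Sum.inl (Sum.inl (Sum.inl i))) (Sum.inl (Sum.inl (Sum.inr j))) ≤ 3 := by
      have := SimpleGraph.dist_le w3
      simpa [hw3] using this
    have hreach : (BCGraph a b).Reachable (Sum.inl (Sum.inl (Sum.inl i))) (Sum.inl (Sum.inl (Sum.inr j))) := ⟨w3⟩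
    obtain ⟨p0, hp0⟩ := hreach.exists_walk_length_eq_dist
    have hdist : (BCGraph a b).dist (Sum.inl (Sum.inl (Sum.inl i))) (Sum.inl (Sum.inl (Sum.inr j))) = 3 := by
      have := len_ge_three horth p0
      omega
    refine ⟨hdist, fun p _ hlen => ?_⟩
    rw [hdist] at hlen
    cases p with
    | cons h q =>
      cases q with
      | nil => simp at hlen
      | cons h2 r =>
        cases r with
        | nil => simp at hlen
        | cons h3 r' =>
          cases r' with
          | cons h4 r'' => simp only [SimpleGraph.Walk.length_cons] at hlen; omega
          | nil =>
            -- h : A i adj v, h2 : v adj w, h3 : w adj B j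
            rcases nbrA h with ⟨k, hk, hak⟩ | hk
            · exfalso
              subst hk
              rcases nbrB h3 with ⟨k', hk', hbk⟩ | hk' <;> subst hk'
              · exact not_adjCC h2
              · exact not_adjCY h2
            · subst hk
              rcases nbrX h2 with ⟨i', hi'⟩ | hi'
              · exfalso
                subst hi'
                rcases nbrB h3 with ⟨k', hk', hbk⟩ | hk' <;> simp at hk'
              · subst hi'
                simp [SimpleGraph.Walk.support_cons]
  · rintro ⟨k, hak, hbk⟩
    set w2 : (BCGraph a b).Walk (Sum.inl (Sum.inl (Sum.inl i))) (Sum.inl (Sum.inl (Sum.inr j))) :=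
      .cons (adjAC hak) (.cons (adjCB hbk) .nil) with hw2
    have hle : (BCGraph a b).dist (Sum.inl (Sum.inl (Sum.inl i))) (Sum.inl (Sum.inl (Sum.inr j))) ≤ 2 := by
      have := SimpleGraph.dist_le w2
      simpa [hw2] using this
    have hreach : (BCGraph a b).Reachable (Sum.inl (Sum.inl (Sum.inl i))) (Sum.inl (Sum.inl (Sum.inr j))) := ⟨w2⟩
    obtain ⟨p0, hp0⟩ := hreach.exists_walk_length_eq_dist
    have hdist : (BCGraph a b).dist (Sum.inl (Sum.inl (Sum.inl i))) (Sum.inl (Sum.inl (Sum.inr j))) = 2 := by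
      have := len_ge_two p0
      omega
    refine ⟨hdist, fun p _ hlen => ?_⟩
    rw [hdist] at hlen
    cases p with
    | cons h q =>
      cases q with
      | nil => simp at hlen
      | cons h2 r =>
        cases r with
        | cons h3 r' => simp only [SimpleGraph.Walk.length_cons] at hlen; omega
        | nil =>
          rcases nbrA h with ⟨k', hk', _⟩ | hk'
          · subst hk'
            simp [SimpleGraph.Walk.support_cons]
          · exfalso
            subst hk'
            rcases nbrB h2 with ⟨k2, hk2, _⟩ | hk2 <;> simp at hk2
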